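/- arXiv:1811.10580 — 3 statements merged into one kernel-verified Lean document; each statement's English description precedes it below -/
import Mathlib

section
/- Let X be a matching contained in a path L on the real line, and let I be a subinterval of L (a set of consecutive edges of L). Then there exists an X-alternating path P in the complete graph on the vertices such that c(P ∩ X) = c(X ∩ I) and c(P \ X) = c(I \ X). -/
/-!
Let `m` be the vertex list of `I` and keep, of `m`, its two ends and the endpoints of the
`X`-edges of `I`. On a sorted vertex list, `s(a, b)` is an edge exactly when no vertex lies
strictly between `a` and `b`. Hence the kept sublist has the same `X`-edges as `I`, and each of
its inner vertices, being matched, lies on one of its `X`-edges, so it alternates. Both paths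
telescope to the same total length (last vertex minus first), so their non-`X` parts cost the
same as well.
-/

open scoped Classical

/-- The list of edges of the path visiting the vertices of `l` in order. -/
def edgeList {V : Type*} (l : List V) : List (Sym2 V) :=
  l.zipWith (fun a b => s(a, b)) l.tail

/-- The cost of an edge of points of the real line: the distance between its endpoints. -/
noncomputable def edgeCost (e : Sym2 ℝ) : ℝ :=
  Sym2.lift ⟨fun a b => |a - b|, fun a b => abs_sub_comm a b⟩ e

/-- The total cost of a finite set of edges. -/
noncomputable def setCost (S : Finset (Sym2 ℝ)) : ℝ := ∑ e ∈ S, edgeCost e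

/-- A list of edges is `M`-alternating if consecutive edges alternate between membership
and non-membership in `M`. -/
def IsAlt (M : Set (Sym2 ℝ)) (es : List (Sym2 ℝ)) : Prop :=
  ∀ (i : ℕ) (h : i + 1 < es.length),
    (es[i]'(Nat.lt_of_succ_lt h) ∈ M ↔ es[i + 1]'h ∉ M)

section EdgeList

variable {V : Type*}

@[simp] lemma edgeList_nil : edgeList ([] : List V) = [] := rfl

@[simp] lemma edgeList_singleton (a : V) : edgeList [a] = [] := rfl

@[simp] lemma edgeList_cons_cons (a b : V) (t : List V) :
    edgeList (a :: b :: t) = s(a, b) :: edgeList (b :: t) := rfl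

lemma mem_of_mem_edgeList {l : List V} {e : Sym2 V} (he : e ∈ edgeList l) {v : V}
    (hv : v ∈ e) : v ∈ l := by
  induction l with
  | nil => simp at he
  | cons a t ih =>
    rcases t with _ | ⟨b, t⟩
    · simp at he
    · rw [edgeList_cons_cons, List.mem_cons] at he
      rcases he with rfl | he
      · rcases Sym2.mem_iff.1 hv with rfl | rfl <;> simp
      · exact List.mem_cons_of_mem a (ih he)

lemma edgeList_drop (l : List V) (n : ℕ) : edgeList (l.drop n) = (edgeList l).drop n := by
  simp [edgeList, List.drop_zipWith, List.tail_drop]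

lemma edgeList_take_succ (l : List V) (n : ℕ) :
    edgeList (l.take (n + 1)) = (edgeList l).take n := by
  induction l generalizing n with
  | nil => simp
  | cons a t ih =>
    rcases t with _ | ⟨b, t⟩
    · simp
    · cases n with
      | zero => simp
      | succ n => simpa using ih n

lemma exists_infix_edgeList_eq {l : List V} {I : List (Sym2 V)} (h : I <:+: edgeList l) :
    ∃ m, m <:+: l ∧ edgeList m = I := by
  obtain ⟨t, hIt, htl⟩ := List.infix_iff_prefix_suffix.1 h
  set k := (edgeList l).length - t.length
  refine ⟨(l.drop k).take (I.length + 1),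
    ((l.drop k).take_prefix _).isInfix.trans (l.drop_suffix k).isInfix, ?_⟩
  rw [edgeList_take_succ, edgeList_drop, ← List.suffix_iff_eq_drop.1 htl,
    ← List.prefix_iff_eq_take.1 hIt]

end EdgeList

section Sorted

variable {α : Type*} [LinearOrder α] {l m : List α} {a b c : α}

lemma head?_le_of_mem (hl : l.Pairwise (· < ·)) (ha : a ∈ l.head?) (hb : b ∈ l) : a ≤ b := by
  cases l with
  | nil => simp at ha
  | cons x t =>
    obtain rfl : x = a := by simpa using ha
    exact (hl.imp le_of_lt).rel_head hb

lemma le_getLast?_of_mem (hl : l.Pairwise (· < ·)) (ha : a ∈ l.getLast?) (hb : b ∈ l) :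
    b ≤ a := by
  obtain ⟨hne, rfl⟩ := List.mem_getLast?_eq_getLast ha
  exact (hl.imp le_of_lt).rel_getLast hb

lemma exists_lt_of_mem_edgeList (hl : l.Pairwise (· < ·)) {e : Sym2 α} (he : e ∈ edgeList l) :
    ∃ a b, a < b ∧ e = s(a, b) := by
  induction l with
  | nil => simp at he
  | cons x t ih =>
    rcases t with _ | ⟨y, t⟩
    · simp at he
    · rw [edgeList_cons_cons, List.mem_cons] at he
      rcases he with rfl | he
      · exact ⟨x, y, List.rel_of_pairwise_cons hl (by simp), rfl⟩
      · exact ih hl.of_cons he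

lemma mem_edgeList_iff (hl : l.Pairwise (· < ·)) (hab : a < b) :
    s(a, b) ∈ edgeList l ↔ a ∈ l ∧ b ∈ l ∧ ∀ x ∈ l, x ≤ a ∨ b ≤ x := by
  induction l with
  | nil => simp
  | cons x t ih =>
    have hx : ∀ z ∈ t, x < z := fun z hz => List.rel_of_pairwise_cons hl hz
    rcases t with _ | ⟨y, t⟩
    · simp only [edgeList_singleton, List.not_mem_nil, false_iff, List.mem_singleton]
      rintro ⟨rfl, rfl, -⟩
      exact lt_irrefl _ hab
    have hy : ∀ z ∈ y :: t, y ≤ z := fun z hz => (hl.of_cons.imp le_of_lt).rel_head hz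
    rw [edgeList_cons_cons, List.mem_cons, ih hl.of_cons]
    constructor
    · rintro (h | ⟨ha, hb, hgap⟩)
      · rcases Sym2.eq_iff.1 h with ⟨rfl, rfl⟩ | ⟨rfl, rfl⟩
        · refine ⟨by simp, by simp, fun z hz => ?_⟩
          rcases List.mem_cons.1 hz with rfl | hz
          exacts [Or.inl le_rfl, Or.inr (hy z hz)]
        · exact absurd (hx _ List.mem_cons_self) (not_lt.2 hab.le)
      · refine ⟨List.mem_cons_of_mem x ha, List.mem_cons_of_mem x hb, fun z hz => ?_⟩
        rcases List.mem_cons.1 hz with rfl | hz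
        exacts [Or.inl (hx a ha).le, hgap z hz]
    · rintro ⟨ha, hb, hgap⟩
      have hb' : b ∈ y :: t := (List.mem_cons.1 hb).resolve_left fun h =>
        (List.mem_cons.1 ha).elim (fun h' => hab.ne (h'.trans h.symm))
          fun ha' => (hx a ha').not_ge (h ▸ hab.le)
      rcases List.mem_cons.1 ha with rfl | ha'
      · left
        have hyb : b ≤ y := (hgap y (by simp)).resolve_left (not_le.2 (hx y (by simp)))
        rw [le_antisymm hyb (hy b hb')]
      · exact Or.inr ⟨ha', hb', fun z hz => hgap z (List.mem_cons_of_mem x hz)⟩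

lemma mem_edgeList_of_subset (hl : l.Pairwise (· < ·)) (hm : m.Pairwise (· < ·)) (hml : m ⊆ l)
    {e : Sym2 α} (he : e ∈ edgeList l) (hem : ∀ v ∈ e, v ∈ m) : e ∈ edgeList m := by
  obtain ⟨a, b, hab, rfl⟩ := exists_lt_of_mem_edgeList hl he
  obtain ⟨-, -, hgap⟩ := (mem_edgeList_iff hl hab).1 he
  exact (mem_edgeList_iff hm hab).2
    ⟨hem a (by simp), hem b (by simp), fun x hx => hgap x (hml hx)⟩

lemma eq_of_mem_edgeList_left (hl : l.Pairwise (· < ·)) (hab : a < b) (hac : a < c)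
    (hb : s(a, b) ∈ edgeList l) (hc : s(a, c) ∈ edgeList l) : b = c := by
  obtain ⟨-, hbl, hgapb⟩ := (mem_edgeList_iff hl hab).1 hb
  obtain ⟨-, hcl, hgapc⟩ := (mem_edgeList_iff hl hac).1 hc
  exact le_antisymm ((hgapb c hcl).resolve_left hac.not_ge)
    ((hgapc b hbl).resolve_left hab.not_ge)

lemma eq_of_mem_edgeList_right (hl : l.Pairwise (· < ·)) (hac : a < c) (hbc : b < c)
    (ha : s(a, c) ∈ edgeList l) (hb : s(b, c) ∈ edgeList l) : a = b := by
  obtain ⟨hal, -, hgapa⟩ := (mem_edgeList_iff hl hac).1 ha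
  obtain ⟨hbl, -, hgapb⟩ := (mem_edgeList_iff hl hbc).1 hb
  exact le_antisymm ((hgapb a hal).resolve_right hac.not_ge)
    ((hgapa b hbl).resolve_right hbc.not_ge)

lemma isChain_edgeList (hl : l.Pairwise (· < ·)) {R : Sym2 α → Sym2 α → Prop}
    (h : ∀ a b c, a < b → b < c → s(a, b) ∈ edgeList l → s(b, c) ∈ edgeList l →
      R s(a, b) s(b, c)) :
    (edgeList l).IsChain R := by
  induction l with
  | nil => simp
  | cons a t ih =>
    rcases t with _ | ⟨b, _ | ⟨c, t⟩⟩
    · simp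
    · simp
    · rw [edgeList_cons_cons]
      refine List.isChain_cons.2 ⟨?_, ih hl.of_cons fun x y z hxy hyz hx hy =>
        h x y z hxy hyz (List.mem_cons_of_mem _ hx) (List.mem_cons_of_mem _ hy)⟩
      simp only [edgeList_cons_cons, List.head?_cons, Option.mem_def, Option.some.injEq,
        forall_eq']
      exact h a b c (List.rel_of_pairwise_cons hl (by simp))
        (List.rel_of_pairwise_cons hl.of_cons (by simp)) (by simp) (by simp)

end Sorted

section Cost

variable {l : List ℝ}

lemma edgeCost_mk_of_le {a b : ℝ} (h : a ≤ b) : edgeCost s(a, b) = b - a := by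
  simp only [edgeCost, Sym2.lift_mk]
  rw [abs_sub_comm, abs_of_nonneg (sub_nonneg.2 h)]

lemma sum_map_edgeCost_edgeList (hl : l.Pairwise (· < ·)) :
    ((edgeList l).map edgeCost).sum = l.getLast?.getD 0 - l.head?.getD 0 := by
  induction l with
  | nil => simp
  | cons a t ih =>
    rcases t with _ | ⟨b, t⟩
    · simp
    · rw [edgeList_cons_cons, List.map_cons, List.sum_cons, ih hl.of_cons,
        edgeCost_mk_of_le (List.rel_of_pairwise_cons hl List.mem_cons_self).le,
        List.getLast?_cons_cons]
      simp

lemma nodup_edgeList (hl : l.Pairwise (· < ·)) : (edgeList l).Nodup := by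
  induction l with
  | nil => simp
  | cons a t ih =>
    rcases t with _ | ⟨b, t⟩
    · simp
    · refine List.nodup_cons.2 ⟨fun h => ?_, ih hl.of_cons⟩
      exact lt_irrefl a
        (List.rel_of_pairwise_cons hl (mem_of_mem_edgeList h (Sym2.mem_mk_left a b)))

lemma setCost_edgeList (hl : l.Pairwise (· < ·)) :
    setCost (edgeList l).toFinset = l.getLast?.getD 0 - l.head?.getD 0 := by
  rw [setCost, List.sum_toFinset _ (nodup_edgeList hl), sum_map_edgeCost_edgeList hl]

lemma setCost_sdiff (S X : Finset (Sym2 ℝ)) :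
    setCost (S \ X) = setCost S - setCost (S ∩ X) := by
  rw [setCost, setCost, setCost, ← Finset.sum_inter_add_sum_sdiff S X, add_sub_cancel_left]

end Cost

section Shortcut

variable {m : List ℝ} {X : Finset (Sym2 ℝ)}

/-- Keeps the two ends of `m` and the endpoints of its `X`-edges: each maximal run `P'` of edges
of `m` outside `X` collapses to the single edge `e(P')`. -/
noncomputable def shortcut (X : Finset (Sym2 ℝ)) (m : List ℝ) : List ℝ :=
  m.filter fun v => v ∈ m.head? ∨ v ∈ m.getLast? ∨ ∃ e ∈ edgeList m, e ∈ X ∧ v ∈ e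

lemma shortcut_sublist : (shortcut X m).Sublist m := List.filter_sublist

lemma pairwise_shortcut (hm : m.Pairwise (· < ·)) : (shortcut X m).Pairwise (· < ·) :=
  hm.sublist shortcut_sublist

lemma head?_shortcut : (shortcut X m).head? = m.head? := by
  cases m <;> simp [shortcut]

lemma getLast?_shortcut : (shortcut X m).getLast? = m.getLast? := by
  rcases m.eq_nil_or_concat with rfl | ⟨L, b, rfl⟩
  · rfl
  · simp [shortcut, List.filter_append]

lemma mem_shortcut_of_mem_edgeList {e : Sym2 ℝ} (he : e ∈ edgeList m) (heX : e ∈ X) {v : ℝ}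
    (hv : v ∈ e) : v ∈ shortcut X m :=
  List.mem_filter.2 ⟨mem_of_mem_edgeList he hv, by simpa using Or.inr (Or.inr ⟨e, he, heX, hv⟩)⟩

lemma mem_edgeList_shortcut (hm : m.Pairwise (· < ·)) {e : Sym2 ℝ} (he : e ∈ edgeList m)
    (heX : e ∈ X) : e ∈ edgeList (shortcut X m) :=
  mem_edgeList_of_subset hm (pairwise_shortcut hm) shortcut_sublist.subset he
    fun _ hv => mem_shortcut_of_mem_edgeList he heX hv

lemma inter_edgeList_shortcut (hm : m.Pairwise (· < ·))
    (hX : ∀ e ∈ X, (∀ v ∈ e, v ∈ m) → e ∈ edgeList m) :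
    (edgeList (shortcut X m)).toFinset ∩ X = (edgeList m).toFinset ∩ X := by
  ext e
  simp only [Finset.mem_inter, List.mem_toFinset]
  exact ⟨fun ⟨he, heX⟩ =>
      ⟨hX e heX fun v hv => shortcut_sublist.subset (mem_of_mem_edgeList he hv), heX⟩,
    fun ⟨he, heX⟩ => ⟨mem_edgeList_shortcut hm he heX, heX⟩⟩

lemma isAlt_shortcut (hm : m.Pairwise (· < ·))
    (hmatch : ∀ e ∈ X, ∀ f ∈ X, e ≠ f → ∀ x : ℝ, x ∈ e → x ∉ f) :
    IsAlt X (edgeList (shortcut X m)) := by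
  have hp := pairwise_shortcut (X := X) hm
  refine List.isChain_iff_getElem.1 (isChain_edgeList hp
    (R := fun e f => e ∈ (X : Set (Sym2 ℝ)) ↔ f ∉ (X : Set (Sym2 ℝ)))
    fun a b c hab hbc h₁ h₂ => ⟨?_, ?_⟩)
  · intro hX₁ hX₂
    refine hmatch _ hX₁ _ hX₂ (fun h => ?_) b (Sym2.mem_mk_right a b) (Sym2.mem_mk_left b c)
    rcases Sym2.eq_iff.1 h with ⟨h, -⟩ | ⟨h, -⟩ <;> linarith
  · intro hX₂
    by_contra hX₁
    have hb := List.mem_filter.1 (mem_of_mem_edgeList h₁ (Sym2.mem_mk_right a b))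
    have ha := shortcut_sublist.subset (mem_of_mem_edgeList h₁ (Sym2.mem_mk_left a b))
    have hc := shortcut_sublist.subset (mem_of_mem_edgeList h₂ (Sym2.mem_mk_right b c))
    simp only [decide_eq_true_eq] at hb
    rcases hb.2 with hhead | hlast | ⟨e, he, heX, hbe⟩
    · exact (head?_le_of_mem hm hhead ha).not_gt hab
    · exact (le_getLast?_of_mem hm hlast hc).not_gt hbc
    -- `b` is matched, and its matching edge must be one of the two edges of the path at `b`.
    · obtain ⟨u, w, huw, rfl⟩ := exists_lt_of_mem_edgeList hm he
      have he' := mem_edgeList_shortcut hm he heX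
      rcases Sym2.mem_iff.1 hbe with rfl | rfl
      · exact hX₂ (eq_of_mem_edgeList_left hp huw hbc he' h₂ ▸ heX)
      · exact hX₁ (eq_of_mem_edgeList_right hp huw hab he' h₁ ▸ heX)

end Shortcut

/-- Let `l` be the line path (its vertices listed in increasing order), let
`X` be a matching contained in the edges of the line, and let `I` be a subinterval of the
line, i.e. a contiguous segment (infix) of its edge list.  Then there is an `X`-alternating
path `p` (in the complete graph on the points) with `c(edges of p ∩ X) = c(X ∩ I)` and
`c(edges of p \ X) = c(I \ X)`. -/
theorem stmt7 (l : List ℝ) (hl : l.Chain' (· < ·))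
    (X : Finset (Sym2 ℝ)) (hXL : X ⊆ (edgeList l).toFinset)
    (hmatch : ∀ e ∈ X, ∀ f ∈ X, e ≠ f → ∀ x : ℝ, x ∈ e → x ∉ f)
    (I : List (Sym2 ℝ)) (hI : I <:+: edgeList l) :
    ∃ p : List ℝ, p.Nodup ∧ IsAlt (↑X) (edgeList p) ∧
      setCost ((edgeList p).toFinset ∩ X) = setCost (I.toFinset ∩ X) ∧
      setCost ((edgeList p).toFinset \ X) = setCost (I.toFinset \ X) := by
  obtain ⟨m, hml, rfl⟩ := exists_infix_edgeList_eq hI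
  have hsorted : l.Pairwise (· < ·) := List.isChain_iff_pairwise.1 hl
  have hm : m.Pairwise (· < ·) := hsorted.sublist hml.sublist
  have hX : (edgeList (shortcut X m)).toFinset ∩ X = (edgeList m).toFinset ∩ X :=
    inter_edgeList_shortcut hm fun e he hem =>
      mem_edgeList_of_subset hsorted hm hml.subset (List.mem_toFinset.1 (hXL he)) hem
  have hcost : setCost (edgeList (shortcut X m)).toFinset = setCost (edgeList m).toFinset := by
    rw [setCost_edgeList (pairwise_shortcut hm), setCost_edgeList hm, head?_shortcut,
      getLast?_shortcut]
  refine ⟨shortcut X m, (pairwise_shortcut hm).imp ne_of_lt, isAlt_shortcut hm hmatch,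
    congrArg setCost hX, ?_⟩
  rw [setCost_sdiff, setCost_sdiff, hX, hcost]
end

section
/- Let points lie on the real line with distance costs, let O_1 be the min-cost perfect matching on a set V_1, and O_2 the min-cost perfect matching on V_2 ⊇ V_1 with |V_2 \ V_1| = 2k. Then every edge {u,v} of O_2 with both endpoints in V_1 satisfies: no point of V_2 lies strictly between u and v. -/
/-- The total cost of a matching, given as a finite set of edges. -/
noncomputable def mCost (M : Finset (Sym2 ℝ)) : ℝ := ∑ e ∈ M, edgeCost e

/-- `M` is a perfect matching on the finite point set `S`: its edges are non-loops with
both endpoints in `S`, and every point of `S` lies in exactly one edge. -/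
def IsPM (M : Finset (Sym2 ℝ)) (S : Finset ℝ) : Prop :=
  (∀ e ∈ M, ¬ e.IsDiag) ∧ (∀ e ∈ M, ∀ x ∈ e, x ∈ S) ∧
  (∀ x ∈ S, ∃! e, e ∈ M ∧ x ∈ e)

lemma swap_pm (M : Finset (Sym2 ℝ)) (S : Finset ℝ) (hM : IsPM M S)
    (a b c d : ℝ) (hab : s(a,b) ∈ M) (hcd : s(c,d) ∈ M)
    (hac : a ≠ c) (had : a ≠ d) (hbc : b ≠ c) (hbd : b ≠ d) :
    ∃ M' : Finset (Sym2 ℝ), IsPM M' S ∧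
      mCost M' + edgeCost s(a,b) + edgeCost s(c,d)
        = mCost M + edgeCost s(a,c) + edgeCost s(b,d) := by
  obtain ⟨hdiag, hpts, huniq⟩ := hM
  have hne_ab : a ≠ b := by
    intro h; exact hdiag _ hab (by simp [h])
  have hne_cd : c ≠ d := by
    intro h; exact hdiag _ hcd (by simp [h])
  have hedges : s(a,b) ≠ s(c,d) := by
    simp [Sym2.eq_iff]; tauto
  have haS : a ∈ S := hpts _ hab a (by simp)
  have hbS : b ∈ S := hpts _ hab b (by simp)
  have hcS : c ∈ S := hpts _ hcd c (by simp)
  have hdS : d ∈ S := hpts _ hcd d (by simp)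
  have hacM : s(a,c) ∉ M := by
    intro h
    have := (huniq a haS).unique ⟨hab, by simp⟩ ⟨h, by simp⟩
    rw [Sym2.eq_iff] at this
    tauto
  have hbdM : s(b,d) ∉ M := by
    intro h
    have := (huniq b hbS).unique ⟨hab, by simp⟩ ⟨h, by simp⟩
    rw [Sym2.eq_iff] at this
    tauto
  have hacbd : s(a,c) ≠ s(b,d) := by
    simp [Sym2.eq_iff]; tauto
  set E : Finset (Sym2 ℝ) := (M.erase s(a,b)).erase s(c,d) with hE
  refine ⟨insert s(a,c) (insert s(b,d) E), ⟨?_, ?_, ?_⟩, ?_⟩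
  · intro e he
    simp only [Finset.mem_insert, hE, Finset.mem_erase] at he
    rcases he with rfl | rfl | ⟨_, _, he⟩
    · simp [Sym2.isDiag_iff_proj_eq, hac]
    · simp [Sym2.isDiag_iff_proj_eq, hbd]
    · exact hdiag _ he
  · intro e he x hx
    simp only [Finset.mem_insert, hE, Finset.mem_erase] at he
    rcases he with rfl | rfl | ⟨_, _, he⟩
    · rcases Sym2.mem_iff.mp hx with rfl | rfl <;> assumption
    · rcases Sym2.mem_iff.mp hx with rfl | rfl <;> assumption
    · exact hpts _ he x hx
  · intro x hxS
    obtain ⟨f, ⟨hfM, hxf⟩, hfun⟩ := huniq x hxS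
    by_cases hx : x = a ∨ x = b ∨ x = c ∨ x = d
    · -- x is one of the four swapped vertices
      have key : ∀ g, (g ∈ insert s(a,c) (insert s(b,d) E) ∧ x ∈ g) →
          g = (if x = a ∨ x = c then s(a,c) else s(b,d)) := by
        intro g ⟨hg, hxg⟩
        simp only [Finset.mem_insert, hE, Finset.mem_erase] at hg
        rcases hg with rfl | rfl | ⟨hg1, hg2, hgM⟩
        · rcases Sym2.mem_iff.mp hxg with rfl | rfl <;> simp
        · rcases Sym2.mem_iff.mp hxg with rfl | rfl
          · rw [if_neg]; push_neg; exact ⟨hne_ab.symm, hbc⟩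
          · rw [if_neg]; push_neg; exact ⟨had.symm, hne_cd.symm⟩
        · -- g ∈ M, g ≠ s(a,b), g ≠ s(c,d); x ∈ g with x among a,b,c,d: contradiction
          exfalso
          rcases hx with rfl | rfl | rfl | rfl
          · exact hg2 ((huniq x hxS).unique ⟨hgM, hxg⟩ ⟨hab, by simp⟩)
          · exact hg2 ((huniq x hxS).unique ⟨hgM, hxg⟩ ⟨hab, by simp⟩)
          · exact hg1 ((huniq x hxS).unique ⟨hgM, hxg⟩ ⟨hcd, by simp⟩)
          · exact hg1 ((huniq x hxS).unique ⟨hgM, hxg⟩ ⟨hcd, by simp⟩)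
      refine ⟨if x = a ∨ x = c then s(a,c) else s(b,d), ⟨?_, ?_⟩, key⟩
      · split <;> simp
      · split
        · next h => rcases h with rfl | rfl <;> simp
        · next h =>
          push_neg at h
          rcases hx with rfl | rfl | rfl | rfl
          · exact absurd rfl h.1
          · simp
          · exact absurd rfl h.2
          · simp
    · push_neg at hx
      obtain ⟨hxa, hxb, hxc, hxd⟩ := hx
      have hf1 : f ≠ s(a,b) := by
        intro h; rw [h] at hxf; rcases Sym2.mem_iff.mp hxf with rfl | rfl
        · exact hxa rfl
        · exact hxb rfl
      have hf2 : f ≠ s(c,d) := by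
        intro h; rw [h] at hxf; rcases Sym2.mem_iff.mp hxf with rfl | rfl
        · exact hxc rfl
        · exact hxd rfl
      refine ⟨f, ⟨by simp [hE, Finset.mem_insert, Finset.mem_erase, hf1, hf2, hfM], hxf⟩, ?_⟩
      intro g ⟨hg, hxg⟩
      simp only [Finset.mem_insert, hE, Finset.mem_erase] at hg
      rcases hg with rfl | rfl | ⟨_, _, hgM⟩
      · rcases Sym2.mem_iff.mp hxg with rfl | rfl
        · exact absurd rfl hxa
        · exact absurd rfl hxc
      · rcases Sym2.mem_iff.mp hxg with rfl | rfl
        · exact absurd rfl hxb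
        · exact absurd rfl hxd
      · exact hfun g ⟨hgM, hxg⟩
  · -- cost identity
    have hcd' : s(c,d) ∈ M.erase s(a,b) := Finset.mem_erase.mpr ⟨hedges.symm, hcd⟩
    have hacE : s(a,c) ∉ insert s(b,d) E := by
      intro h
      rcases Finset.mem_insert.mp h with h | h
      · exact hacbd h
      · exact hacM (Finset.mem_of_mem_erase (Finset.mem_of_mem_erase h))
    have hbdE : s(b,d) ∉ E := by
      simp [hE, Finset.mem_erase, hbdM]
    have h1 : mCost (insert s(a,c) (insert s(b,d) E))
        = edgeCost s(a,c) + (edgeCost s(b,d) + ∑ e ∈ E, edgeCost e) := by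
      rw [mCost, Finset.sum_insert hacE, Finset.sum_insert hbdE]
    have h2 : ∑ e ∈ E, edgeCost e = mCost M - edgeCost s(a,b) - edgeCost s(c,d) := by
      rw [hE, Finset.sum_erase_eq_sub hcd', Finset.sum_erase_eq_sub hab, mCost]
    rw [h1, h2]; ring

/-- Points on the real line with distance costs; `O₁` is the min-cost perfect
matching on `V₁` and `O₂` the min-cost perfect matching on `V₂ ⊇ V₁` with `|V₂ \ V₁| = 2k`.
Every edge `{u,v}` of `O₂` with both endpoints in `V₁` has no point of `V₂` strictly between
its endpoints (it connects consecutive points of `V₂`). -/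
theorem stmt11 (V₁ V₂ : Finset ℝ) (k : ℕ) (hsub : V₁ ⊆ V₂) (hk : (V₂ \ V₁).card = 2 * k)
    (O₁ O₂ : Finset (Sym2 ℝ))
    (hO₁ : IsPM O₁ V₁) (hO₁min : ∀ M, IsPM M V₁ → mCost O₁ ≤ mCost M)
    (hO₂ : IsPM O₂ V₂) (hO₂min : ∀ M, IsPM M V₂ → mCost O₂ ≤ mCost M) :
    ∀ u v : ℝ, s(u, v) ∈ O₂ → u ∈ V₁ → v ∈ V₁ →
      ∀ w ∈ V₂, ¬ (min u v < w ∧ w < max u v) := by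
  intro u v huv hu hv w hw hbet
  obtain ⟨h1, h2⟩ := hbet
  set a := min u v with ha
  set b := max u v with hb
  have hs : s(a, b) = s(u, v) := by
    rcases le_total u v with h | h
    · rw [ha, hb, min_eq_left h, max_eq_right h]
    · rw [ha, hb, min_eq_right h, max_eq_left h, Sym2.eq_swap]
  have hab : s(a, b) ∈ O₂ := hs ▸ huv
  have haw : a < w := h1
  have hwb : w < b := h2
  obtain ⟨e, ⟨heM, hwe⟩, heuniq⟩ := hO₂.2.2 w hw
  obtain ⟨x, rfl⟩ : ∃ x, e = s(w, x) := by
    induction e using Sym2.ind with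
    | _ y z =>
      rcases Sym2.mem_iff.mp hwe with rfl | rfl
      · exact ⟨z, rfl⟩
      · exact ⟨y, Sym2.eq_swap.symm⟩
  have hwx : w ≠ x := by
    intro h; exact hO₂.1 _ heM (by simp [h])
  have haV : a ∈ V₂ := hO₂.2.1 _ hab a (by simp)
  have hbV : b ∈ V₂ := hO₂.2.1 _ hab b (by simp)
  have hwa : w ≠ a := ne_of_gt haw
  have hwb' : w ≠ b := ne_of_lt hwb
  have hxa : x ≠ a := by
    rintro rfl
    have h := (hO₂.2.2 a haV).unique ⟨heM, by simp⟩ ⟨hab, by simp⟩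
    rw [Sym2.eq_iff] at h
    rcases h with ⟨h, _⟩ | ⟨h, _⟩
    · exact hwa h
    · exact hwb' h
  have hxb : x ≠ b := by
    rintro rfl
    have h := (hO₂.2.2 b hbV).unique ⟨heM, by simp⟩ ⟨hab, by simp⟩
    rw [Sym2.eq_iff] at h
    rcases h with ⟨h, _⟩ | ⟨h, _⟩
    · exact hwa h
    · exact hwb' h
  have hec : ∀ p q : ℝ, edgeCost s(p, q) = |p - q| := fun p q => rfl
  rcases lt_or_gt_of_ne hwx with hlt | hgt
  · -- w < x : swap s(a,b), s(w,x) into s(a,w), s(b,x)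
    obtain ⟨M', hPM, hcost⟩ := swap_pm O₂ V₂ hO₂ a b w x hab heM
      (ne_of_lt haw).symm.symm hxa.symm hwb'.symm hxb.symm
    have hmin := hO₂min M' hPM
    rw [hec, hec, hec, hec] at hcost
    have e1 : |a - b| = b - a := by rw [abs_sub_comm]; exact abs_of_nonneg (by linarith)
    have e2 : |w - x| = x - w := by rw [abs_sub_comm]; exact abs_of_nonneg (by linarith)
    have e3 : |a - w| = w - a := by rw [abs_sub_comm]; exact abs_of_nonneg (by linarith)
    have e4 : |b - x| < (b - a) + (x - w) - (w - a) := by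
      rw [abs_sub_lt_iff]; constructor <;> linarith
    rw [e1, e2, e3] at hcost
    linarith
  · -- x < w : swap s(b,a), s(w,x) into s(b,w), s(a,x)
    have hba : s(b, a) ∈ O₂ := by rw [Sym2.eq_swap]; exact hab
    obtain ⟨M', hPM, hcost⟩ := swap_pm O₂ V₂ hO₂ b a w x hba heM
      hwb'.symm hxb.symm hwa.symm hxa.symm
    have hmin := hO₂min M' hPM
    rw [hec, hec, hec, hec] at hcost
    have e1 : |b - a| = b - a := abs_of_nonneg (by linarith)
    have e2 : |w - x| = w - x := abs_of_nonneg (by linarith)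
    have e3 : |b - w| = b - w := abs_of_nonneg (by linarith)
    have e4 : |a - x| < (b - a) + (w - x) - (b - w) := by
      rw [abs_sub_lt_iff]; constructor <;> linarith
    rw [e1, e2, e3] at hcost
    linarith
end

section
/- Let O_1, O_2 be min-cost perfect matchings on the line as above (O_2 on V_2 = V_1 ∪ {2k new points}). Then each connected component of O_1 Δ O_2 is a path that starts and ends with an edge of O_2, and after removing its first and last edge, the remainder is contained in the line path L; consequently the number of maximal paths of (O_1 Δ O_2) ∩ L is at most k and each such path starts and ends with an edge of O_1. -/
@[simp] lemma edgeCost_mk (a b : ℝ) : edgeCost s(a,b) = |a - b| := rfl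

lemma isPM_swap {S : Finset ℝ} {M : Finset (Sym2 ℝ)} (hM : IsPM M S)
    {x y z t : ℝ} (hxy : s(x,y) ∈ M) (hzt : s(z,t) ∈ M)
    (h1 : x ≠ y) (h2 : x ≠ z) (h3 : x ≠ t) (h4 : y ≠ z) (h5 : y ≠ t) (h6 : z ≠ t) :
    IsPM ((M \ {s(x,y), s(z,t)}) ∪ {s(x,z), s(y,t)}) S ∧
    mCost ((M \ {s(x,y), s(z,t)}) ∪ {s(x,z), s(y,t)}) + (|x-y| + |z-t|)
      = mCost M + (|x-z| + |y-t|) := by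
  obtain ⟨hnd, hin, hcov⟩ := hM
  have hxS : x ∈ S := hin _ hxy x (by simp)
  have hyS : y ∈ S := hin _ hxy y (by simp)
  have hzS : z ∈ S := hin _ hzt z (by simp)
  have htS : t ∈ S := hin _ hzt t (by simp)
  -- uniqueness of edges at each of x y z t
  have uxy : ∀ e ∈ M, x ∈ e → e = s(x,y) := by
    intro e he hx
    obtain ⟨u, ⟨_, _⟩, hu⟩ := hcov x hxS
    rw [hu e ⟨he, hx⟩, hu s(x,y) ⟨hxy, by simp⟩]
  have uyx : ∀ e ∈ M, y ∈ e → e = s(x,y) := by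
    intro e he hy
    obtain ⟨u, ⟨_, _⟩, hu⟩ := hcov y hyS
    rw [hu e ⟨he, hy⟩, hu s(x,y) ⟨hxy, by simp⟩]
  have uzt : ∀ e ∈ M, z ∈ e → e = s(z,t) := by
    intro e he hz
    obtain ⟨u, ⟨_, _⟩, hu⟩ := hcov z hzS
    rw [hu e ⟨he, hz⟩, hu s(z,t) ⟨hzt, by simp⟩]
  have utz : ∀ e ∈ M, t ∈ e → e = s(z,t) := by
    intro e he ht
    obtain ⟨u, ⟨_, _⟩, hu⟩ := hcov t htS
    rw [hu e ⟨he, ht⟩, hu s(z,t) ⟨hzt, by simp⟩]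
  have hne12 : s(x,y) ≠ s(z,t) := by simp [Sym2.eq_iff]; tauto
  have hne34 : s(x,z) ≠ s(y,t) := by simp [Sym2.eq_iff]; tauto
  have hxzM : s(x,z) ∉ M := by
    intro h; have := uxy _ h (by simp); rw [Sym2.eq_iff] at this; tauto
  have hytM : s(y,t) ∉ M := by
    intro h; have := uyx _ h (by simp); rw [Sym2.eq_iff] at this; tauto
  constructor
  · refine ⟨?_, ?_, ?_⟩
    · intro e he
      rcases Finset.mem_union.1 he with h | h
      · exact hnd e (Finset.mem_sdiff.1 h).1
      · simp only [Finset.mem_insert, Finset.mem_singleton] at h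
        rcases h with rfl | rfl <;> simp [Sym2.mk_isDiag_iff, h2, h5]
    · intro e he a ha
      rcases Finset.mem_union.1 he with h | h
      · exact hin e (Finset.mem_sdiff.1 h).1 a ha
      · simp only [Finset.mem_insert, Finset.mem_singleton] at h
        rcases h with rfl | rfl <;> rw [Sym2.mem_iff] at ha <;>
          rcases ha with rfl | rfl <;> assumption
    · intro a haS
      obtain ⟨ea, ⟨heaM, haea⟩, hu⟩ := hcov a haS
      by_cases hax : a = x
      · subst hax
        refine ⟨s(a,z), ⟨Finset.mem_union_right _ (by simp), by simp⟩, ?_⟩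
        rintro e ⟨he, hxe⟩
        rcases Finset.mem_union.1 he with h | h
        · exfalso
          obtain ⟨heM, hnot⟩ := Finset.mem_sdiff.1 h
          exact hnot (by simp [uxy _ heM hxe])
        · simp only [Finset.mem_insert, Finset.mem_singleton] at h
          rcases h with rfl | rfl
          · rfl
          · rw [Sym2.mem_iff] at hxe; tauto
      by_cases hay : a = y
      · subst hay
        refine ⟨s(a,t), ⟨Finset.mem_union_right _ (by simp), by simp⟩, ?_⟩
        rintro e ⟨he, hxe⟩
        rcases Finset.mem_union.1 he with h | h
        · exfalso
          obtain ⟨heM, hnot⟩ := Finset.mem_sdiff.1 h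
          exact hnot (by simp [uyx _ heM hxe])
        · simp only [Finset.mem_insert, Finset.mem_singleton] at h
          rcases h with rfl | rfl
          · rw [Sym2.mem_iff] at hxe; tauto
          · rfl
      by_cases haz : a = z
      · subst haz
        refine ⟨s(x,a), ⟨Finset.mem_union_right _ (by simp), by simp⟩, ?_⟩
        rintro e ⟨he, hxe⟩
        rcases Finset.mem_union.1 he with h | h
        · exfalso
          obtain ⟨heM, hnot⟩ := Finset.mem_sdiff.1 h
          exact hnot (by simp [uzt _ heM hxe])
        · simp only [Finset.mem_insert, Finset.mem_singleton] at h
          rcases h with rfl | rfl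
          · rfl
          · rw [Sym2.mem_iff] at hxe; exfalso; tauto
      by_cases hat : a = t
      · subst hat
        refine ⟨s(y,a), ⟨Finset.mem_union_right _ (by simp), by simp⟩, ?_⟩
        rintro e ⟨he, hxe⟩
        rcases Finset.mem_union.1 he with h | h
        · exfalso
          obtain ⟨heM, hnot⟩ := Finset.mem_sdiff.1 h
          exact hnot (by simp [utz _ heM hxe])
        · simp only [Finset.mem_insert, Finset.mem_singleton] at h
          rcases h with rfl | rfl
          · rw [Sym2.mem_iff] at hxe; exfalso; tauto
          · rfl
      · -- a not among x y z t
        have hea1 : ea ≠ s(x,y) := by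
          intro h; rw [h, Sym2.mem_iff] at haea; tauto
        have hea2 : ea ≠ s(z,t) := by
          intro h; rw [h, Sym2.mem_iff] at haea; tauto
        refine ⟨ea, ⟨Finset.mem_union_left _ (Finset.mem_sdiff.2 ⟨heaM, by simp [hea1, hea2]⟩), haea⟩, ?_⟩
        rintro e ⟨he, hae⟩
        rcases Finset.mem_union.1 he with h | h
        · exact hu e ⟨(Finset.mem_sdiff.1 h).1, hae⟩
        · simp only [Finset.mem_insert, Finset.mem_singleton] at h
          rcases h with rfl | rfl <;> rw [Sym2.mem_iff] at hae <;> tauto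
  · -- cost
    have hsub : ({s(x,y), s(z,t)} : Finset (Sym2 ℝ)) ⊆ M := by
      intro e he; simp only [Finset.mem_insert, Finset.mem_singleton] at he
      rcases he with rfl | rfl <;> assumption
    have hdisj : Disjoint (M \ {s(x,y), s(z,t)}) ({s(x,z), s(y,t)} : Finset (Sym2 ℝ)) := by
      rw [Finset.disjoint_right]
      intro e he; simp only [Finset.mem_insert, Finset.mem_singleton] at he
      rcases he with rfl | rfl <;> simp [hxzM, hytM]
    rw [mCost, Finset.sum_union hdisj, Finset.sum_sdiff_eq_sub hsub]
    rw [Finset.sum_pair hne12, Finset.sum_pair hne34]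
    simp only [edgeCost_mk]
    rw [← mCost]
    ring

lemma no_middle {S : Finset ℝ} {M : Finset (Sym2 ℝ)} (hM : IsPM M S)
    (hmin : ∀ N, IsPM N S → mCost M ≤ mCost N)
    {x y : ℝ} (hxy : s(x,y) ∈ M) (hlt : x < y) {z : ℝ} (hzS : z ∈ S)
    (h1 : x < z) (h2 : z < y) : False := by
  obtain ⟨hnd, hin, hcov⟩ := hM
  have hzx : z ≠ x := ne_of_gt h1
  have hzy : z ≠ y := ne_of_lt h2
  obtain ⟨u, ⟨huM, hzu⟩, huq⟩ := hcov z hzS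
  obtain ⟨t, rfl⟩ := Sym2.mem_iff_exists.mp hzu
  have hzt : z ≠ t := fun h => hnd _ huM (by simp [Sym2.mk_isDiag_iff, ← h])
  have hxS : x ∈ S := hin _ hxy x (by simp)
  have hyS : y ∈ S := hin _ hxy y (by simp)
  have htx : t ≠ x := by
    rintro rfl
    obtain ⟨u', hu', hq⟩ := hcov t hxS
    have h := (hq _ ⟨huM, by simp⟩).trans (hq _ ⟨hxy, by simp⟩).symm
    rw [Sym2.eq_iff] at h; tauto
  have hty : t ≠ y := by
    rintro rfl
    obtain ⟨u', hu', hq⟩ := hcov t hyS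
    have h := (hq _ ⟨huM, by simp⟩).trans (hq _ ⟨hxy, by simp⟩).symm
    rw [Sym2.eq_iff] at h; tauto
  rcases lt_or_gt_of_ne hzt with hlt' | hlt'
  · -- z < t : new edges s(x,z), s(y,t)
    obtain ⟨hPM, hcost⟩ := isPM_swap ⟨hnd, hin, hcov⟩ hxy huM
      (ne_of_lt hlt) hzx.symm htx.symm hzy.symm hty.symm hzt
    have hle := hmin _ hPM
    have key : |x - z| + |y - t| < |x - y| + |z - t| := by
      rcases abs_cases (x - z) with ⟨e1, s1⟩ | ⟨e1, s1⟩ <;>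
      rcases abs_cases (y - t) with ⟨e2, s2⟩ | ⟨e2, s2⟩ <;>
      rcases abs_cases (x - y) with ⟨e3, s3⟩ | ⟨e3, s3⟩ <;>
      rcases abs_cases (z - t) with ⟨e4, s4⟩ | ⟨e4, s4⟩ <;>
      rw [e1, e2, e3, e4] <;> linarith
    linarith
  · -- t < z : new edges s(x,t), s(y,z)
    have huM' : s(t,z) ∈ M := by rwa [Sym2.eq_swap]
    obtain ⟨hPM, hcost⟩ := isPM_swap ⟨hnd, hin, hcov⟩ hxy huM'
      (ne_of_lt hlt) htx.symm hzx.symm hty.symm hzy.symm (ne_of_lt hlt')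
    have hle := hmin _ hPM
    have key : |x - t| + |y - z| < |x - y| + |t - z| := by
      rcases abs_cases (x - t) with ⟨e1, s1⟩ | ⟨e1, s1⟩ <;>
      rcases abs_cases (y - z) with ⟨e2, s2⟩ | ⟨e2, s2⟩ <;>
      rcases abs_cases (x - y) with ⟨e3, s3⟩ | ⟨e3, s3⟩ <;>
      rcases abs_cases (t - z) with ⟨e4, s4⟩ | ⟨e4, s4⟩ <;>
      rw [e1, e2, e3, e4] <;> linarith
    linarith

lemma pm_pair {m : ℕ} {u : ℕ → ℝ} (hu : ∀ i j, i < j → j < m → u i < u j)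
    {S : Finset ℝ} (hS : S = (Finset.range m).image u)
    {M : Finset (Sym2 ℝ)} (hM : IsPM M S) (hmin : ∀ N, IsPM N S → mCost M ≤ mCost N) :
    ∀ j, j < m → Even j → j + 1 < m ∧ s(u j, u (j+1)) ∈ M := by
  obtain ⟨hnd, hin, hcov⟩ := hM
  have hinj : ∀ a b, a < m → b < m → u a = u b → a = b := by
    intro a b ham hbm hab
    rcases lt_trichotomy a b with h | h | h
    · exact absurd hab (ne_of_lt (hu a b h hbm))
    · exact h
    · exact absurd hab.symm (ne_of_lt (hu b a h ham))
  have hmemS : ∀ a, a < m → u a ∈ S := by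
    intro a ha; rw [hS]; exact Finset.mem_image.2 ⟨a, Finset.mem_range.2 ha, rfl⟩
  intro j
  induction j using Nat.strong_induction_on with
  | _ j IH =>
    intro hjm hje
    obtain ⟨e, ⟨heM, hje'⟩, hq⟩ := hcov _ (hmemS j hjm)
    obtain ⟨p, rfl⟩ := Sym2.mem_iff_exists.mp hje'
    have hpS : p ∈ S := hin _ heM p (by simp)
    obtain ⟨l, hl, hul⟩ := Finset.mem_image.1 (hS ▸ hpS)
    rw [Finset.mem_range] at hl
    subst hul
    have hlj : l ≠ j := by
      rintro rfl; exact hnd _ heM (by simp [Sym2.mk_isDiag_iff])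
    rcases lt_or_gt_of_ne hlj with h | h
    · -- l < j : impossible
      exfalso
      have hj2 : 2 ≤ j := by
        rcases hje with ⟨r, hr⟩; omega
      have hl' : l = j - 1 := by
        by_contra hne
        have hlt1 : u l < u (l+1) := hu l (l+1) (by omega) (by omega)
        have hlt2 : u (l+1) < u j := hu (l+1) j (by omega) hjm
        exact no_middle ⟨hnd, hin, hcov⟩ hmin
          (show s(u l, u j) ∈ M by rwa [Sym2.eq_swap]) (hu l j h hjm)
          (hmemS (l+1) (by omega)) hlt1 hlt2
      subst hl'
      obtain ⟨hm1, hprev⟩ := IH (j-2) (by omega) (by omega)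
        (by rcases hje with ⟨r, hr⟩; exact ⟨r-1, by omega⟩)
      have heq : j - 2 + 1 = j - 1 := by omega
      rw [heq] at hprev
      obtain ⟨e', he', hq'⟩ := hcov _ (hmemS (j-1) (by omega))
      have h1 := hq' _ ⟨heM, by simp⟩
      have h2 := hq' _ ⟨hprev, by simp⟩
      have h3 : s(u j, u (j-1)) = s(u (j-2), u (j-1)) := h1.trans h2.symm
      rw [Sym2.eq_iff] at h3
      rcases h3 with ⟨ha, _⟩ | ⟨ha, hb⟩
      · have := hinj _ _ hjm (by omega) ha; omega
      · have := hinj _ _ hjm (by omega) ha; omega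
    · -- l > j : l = j + 1
      have hl' : l = j + 1 := by
        by_contra hne
        exact no_middle ⟨hnd, hin, hcov⟩ hmin heM (hu j l h hl)
          (hmemS (j+1) (by omega)) (hu j (j+1) (by omega) (by omega))
          (hu (j+1) l (by omega) hl)
      subst hl'
      exact ⟨hl, heM⟩

lemma pm_char {m : ℕ} {u : ℕ → ℝ} (hu : ∀ i j, i < j → j < m → u i < u j)
    {S : Finset ℝ} (hS : S = (Finset.range m).image u)
    {M : Finset (Sym2 ℝ)} (hM : IsPM M S) (hmin : ∀ N, IsPM N S → mCost M ≤ mCost N) :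
    ∀ e ∈ M, ∃ j, 2*j+1 < m ∧ e = s(u (2*j), u (2*j+1)) := by
  intro e heM
  obtain ⟨hnd, hin, hcov⟩ := hM
  induction e using Sym2.ind with
  | _ a b =>
    have haS : a ∈ S := hin _ heM a (by simp)
    obtain ⟨j, hj, huj⟩ := Finset.mem_image.1 (hS ▸ haS)
    rw [Finset.mem_range] at hj
    subst huj
    by_cases hje : Even j
    · obtain ⟨hj1, hedge⟩ := pm_pair hu hS ⟨hnd, hin, hcov⟩ hmin j hj hje
      obtain ⟨e', he', hq'⟩ := hcov _ (hin _ heM _ (by simp : u j ∈ s(u j, b)))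
      have h2 : (2 * (j/2)) = j := by rcases hje with ⟨r, hr⟩; omega
      refine ⟨j/2, by omega, ?_⟩
      have e1 := hq' _ ⟨heM, by simp⟩
      have e2 := hq' _ ⟨hedge, by simp⟩
      rw [h2]
      exact e1.trans e2.symm
    · rcases Nat.even_or_odd j with hcon | ⟨r, hr⟩
      · exact absurd hcon hje
      obtain ⟨hj2, hedge⟩ := pm_pair hu hS ⟨hnd, hin, hcov⟩ hmin (j-1) (by omega) ⟨r, by omega⟩
      obtain ⟨e', he', hq'⟩ := hcov _ (hin _ heM _ (by simp : u j ∈ s(u j, b)))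
      have h2 : 2 * ((j-1)/2) = j - 1 := by omega
      have heq : j - 1 + 1 = j := by omega
      refine ⟨(j-1)/2, by omega, ?_⟩
      have e1 := hq' _ ⟨heM, by simp⟩
      rw [heq] at hedge
      have e2 := hq' _ ⟨hedge, by simp⟩
      rw [h2, heq]
      exact e1.trans e2.symm

lemma pm_even {m : ℕ} {u : ℕ → ℝ} (hu : ∀ i j, i < j → j < m → u i < u j)
    {S : Finset ℝ} (hS : S = (Finset.range m).image u)
    {M : Finset (Sym2 ℝ)} (hM : IsPM M S) (hmin : ∀ N, IsPM N S → mCost M ≤ mCost N) :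
    Even m := by
  by_contra hodd
  rcases Nat.even_or_odd m with h | ⟨r, hr⟩
  · exact hodd h
  obtain ⟨h, _⟩ := pm_pair hu hS hM hmin (m-1) (by omega) ⟨r, by omega⟩
  omega

/-- `V₁` consists of the points `v 0 < v 1 < ... < v (n-1)`, `V₂ ⊇ V₁` has
`2k` extra points, and `O₁`, `O₂` are the min-cost perfect matchings of `V₁`, `V₂`.  The
edges of the line `L` are the pairs `{v i, v (i+1)}` of consecutive points of `V₁`.  Let
`D = O₁ Δ O₂`.  Then: every `D`-edge with both endpoints in `V₁` is an edge of `L` (so each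
component of `D` is contained in `L` after removing its first and last edge); every `D`-edge
at a new vertex is an `O₂`-edge (components are paths starting and ending with `O₂`-edges);
old vertices have `D`-degree `0` or `2` and new vertices `D`-degree `1`; every vertex
incident to a `D`-edge is connected in `D` to a new vertex (each component is a path ending
at new vertices, no cycles); the number of maximal paths of `D ∩ L` is at most `k`; and each
such maximal path starts and ends with an edge of `O₁`. -/
theorem stmt12 (n k : ℕ) (v : ℕ → ℝ) (hv : StrictMono v)
    (V₁ V₂ : Finset ℝ) (hV₁ : V₁ = (Finset.range n).image v)
    (hsub : V₁ ⊆ V₂) (hk : (V₂ \ V₁).card = 2 * k)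
    (O₁ O₂ : Finset (Sym2 ℝ))
    (hO₁ : IsPM O₁ V₁) (hO₁min : ∀ M, IsPM M V₁ → mCost O₁ ≤ mCost M)
    (hO₂ : IsPM O₂ V₂) (hO₂min : ∀ M, IsPM M V₂ → mCost O₂ ≤ mCost M)
    (D : Finset (Sym2 ℝ)) (hD : D = (O₁ \ O₂) ∪ (O₂ \ O₁)) :
    (∀ e ∈ D, (∀ x ∈ e, x ∈ V₁) → ∃ i, i + 1 < n ∧ e = s(v i, v (i + 1))) ∧
    (∀ e ∈ D, (∃ x ∈ e, x ∉ V₁) → e ∈ O₂) ∧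
    (∀ x ∈ V₁, (D.filter (fun e => x ∈ e)).card = 0 ∨ (D.filter (fun e => x ∈ e)).card = 2) ∧
    (∀ x ∈ V₂, x ∉ V₁ → (D.filter (fun e => x ∈ e)).card = 1) ∧
    (∀ x : ℝ, (∃ e ∈ D, x ∈ e) →
      ∃ y, y ∈ V₂ ∧ y ∉ V₁ ∧ (SimpleGraph.fromEdgeSet (↑D : Set (Sym2 ℝ))).Reachable x y) ∧
    (((Finset.range (n - 1)).filter (fun i => s(v i, v (i + 1)) ∈ D ∧
        (i = 0 ∨ s(v (i - 1), v i) ∉ D))).card ≤ k) ∧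
    (∀ i, i + 1 < n → s(v i, v (i + 1)) ∈ D → (i = 0 ∨ s(v (i - 1), v i) ∉ D) →
      s(v i, v (i + 1)) ∈ O₁) ∧
    (∀ i, i + 1 < n → s(v i, v (i + 1)) ∈ D → (i + 2 = n ∨ s(v (i + 1), v (i + 2)) ∉ D) →
      s(v i, v (i + 1)) ∈ O₁) := by
  -- ## setup
  set m := n + 2 * k with hm
  have hvmem : ∀ i, i < n → v i ∈ V₁ := by
    intro i hi; rw [hV₁]; exact Finset.mem_image.2 ⟨i, Finset.mem_range.2 hi, rfl⟩
  have hV1card : V₁.card = n := by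
    rw [hV₁, Finset.card_image_of_injective _ hv.injective, Finset.card_range]
  have hV2card : V₂.card = m := by
    have h1 := Finset.card_sdiff_of_subset hsub
    have h2 := Finset.card_le_card hsub
    omega
  set F := V₂.orderIsoOfFin hV2card with hF
  set w : ℕ → ℝ := fun i => if h : i < m then (F ⟨i, h⟩ : ℝ) else 0 with hwdef
  have hw : ∀ i j, i < j → j < m → w i < w j := by
    intro i j hij hjm
    have him : i < m := lt_trans hij hjm
    simp only [hwdef, dif_pos him, dif_pos hjm]
    exact Subtype.coe_lt_coe.2 (F.lt_iff_lt.2 hij)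
  have hwmem : ∀ i, i < m → w i ∈ V₂ := by
    intro i hi; simp only [hwdef, dif_pos hi]; exact (F ⟨i, hi⟩).2
  have hwim : V₂ = (Finset.range m).image w := by
    apply Finset.Subset.antisymm
    · intro x hx
      refine Finset.mem_image.2 ⟨F.symm ⟨x, hx⟩, Finset.mem_range.2 (F.symm ⟨x, hx⟩).2, ?_⟩
      simp only [hwdef, dif_pos (F.symm ⟨x, hx⟩).2]
      simp
    · intro x hx
      obtain ⟨i, hi, rfl⟩ := Finset.mem_image.1 hx
      exact hwmem i (Finset.mem_range.1 hi)
  have hwinj : ∀ a b, a < m → b < m → w a = w b → a = b := by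
    intro a b ham hbm hab
    rcases lt_trichotomy a b with h | h | h
    · exact absurd hab (ne_of_lt (hw a b h hbm))
    · exact h
    · exact absurd hab.symm (ne_of_lt (hw b a h ham))
  have hvainj : ∀ a b, a < n → b < n → v a = v b → a = b :=
    fun a b _ _ h => hv.injective h
  have hv' : ∀ i j, i < j → j < n → v i < v j := fun i j hij _ => hv hij
  -- characterizations
  have char1 := pm_char hv' hV₁ hO₁ hO₁min
  have pair1 := pm_pair hv' hV₁ hO₁ hO₁min
  have char2 := pm_char hw hwim hO₂ hO₂min
  have pair2 := pm_pair hw hwim hO₂ hO₂min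
  have hneven : Even n := pm_even hv' hV₁ hO₁ hO₁min
  -- σ
  have hsig : ∀ i, ∃ s, i < n → s < m ∧ w s = v i := by
    intro i
    by_cases h : i < n
    · have : v i ∈ V₂ := hsub (hvmem i h)
      rw [hwim] at this
      obtain ⟨s, hs, hws⟩ := Finset.mem_image.1 this
      exact ⟨s, fun _ => ⟨Finset.mem_range.1 hs, hws⟩⟩
    · exact ⟨0, fun h' => absurd h' h⟩
  choose σ hσ using hsig
  have hσm : ∀ i, i < n → σ i < m := fun i h => (hσ i h).1
  have hσw : ∀ i, i < n → w (σ i) = v i := fun i h => (hσ i h).2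
  have hσmono : ∀ i j, i < j → j < n → σ i < σ j := by
    intro i j hij hjn
    have h1 : w (σ i) < w (σ j) := by
      rw [hσw i (lt_trans hij hjn), hσw j hjn]; exact hv hij
    rcases lt_trichotomy (σ i) (σ j) with h | h | h
    · exact h
    · rw [h] at h1; exact absurd h1 (lt_irrefl _)
    · exact absurd (hw _ _ h (hσm i (lt_trans hij hjn))) (not_lt.2 (le_of_lt h1))
  have hσuniq : ∀ i s, i < n → s < m → w s = v i → s = σ i := by
    intro i s hin hsm hws
    exact hwinj s (σ i) hsm (hσm i hin) (by rw [hws, hσw i hin])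
  have hgap : ∀ d a, a + d < n → σ a + d ≤ σ (a + d) := by
    intro d
    induction d with
    | zero => simp
    | succ d ih =>
      intro a ha
      have hrw : a + (d + 1) = a + d + 1 := by omega
      rw [hrw] at ha ⊢
      have h1 := ih a (by omega)
      have h2 := hσmono (a + d) (a + d + 1) (by omega) (by omega)
      omega
  have hσge : ∀ i, i < n → i ≤ σ i := by
    intro i hi
    have h := hgap i 0 (by omega)
    rw [Nat.zero_add] at h
    omega
  have hσle : ∀ i, i < n → σ i ≤ i + 2 * k := by
    intro i hi
    set A := (Finset.range (σ i)).image w with hA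
    set B := (Finset.range i).image v with hB
    have hAcard : A.card = σ i := by
      rw [hA, Finset.card_image_of_injOn, Finset.card_range]
      intro a ha b hb hab
      rw [Finset.mem_coe, Finset.mem_range] at ha hb
      exact hwinj a b (lt_of_lt_of_le ha (le_of_lt (hσm i hi)))
        (lt_of_lt_of_le hb (le_of_lt (hσm i hi))) hab
    have hBcard : B.card = i := by
      rw [hB, Finset.card_image_of_injective _ hv.injective, Finset.card_range]
    have hBA : B ⊆ A := by
      intro x hx
      obtain ⟨j, hj, rfl⟩ := Finset.mem_image.1 hx
      rw [Finset.mem_range] at hj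
      refine Finset.mem_image.2 ⟨σ j, Finset.mem_range.2 (hσmono j i hj hi), hσw j (by omega)⟩
    have hdiff : A \ B ⊆ V₂ \ V₁ := by
      intro x hx
      obtain ⟨hxA, hxB⟩ := Finset.mem_sdiff.1 hx
      obtain ⟨t, ht, rfl⟩ := Finset.mem_image.1 hxA
      rw [Finset.mem_range] at ht
      have htm : t < m := lt_trans ht (hσm i hi)
      refine Finset.mem_sdiff.2 ⟨hwmem t htm, ?_⟩
      intro hV
      rw [hV₁] at hV
      obtain ⟨j, hj, hvj⟩ := Finset.mem_image.1 hV
      rw [Finset.mem_range] at hj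
      have hji : j < i := by
        have h1 : w t < w (σ i) := hw t (σ i) ht (hσm i hi)
        rw [hσw i hi, ← hvj] at h1
        rcases lt_trichotomy j i with h | h | h
        · exact h
        · rw [h] at h1; exact absurd h1 (lt_irrefl _)
        · exact absurd (hv h) (not_lt.2 (le_of_lt h1))
      exact hxB (Finset.mem_image.2 ⟨j, Finset.mem_range.2 hji, hvj⟩)
    have h1 : (A \ B).card ≤ (V₂ \ V₁).card := Finset.card_le_card hdiff
    have h2 : (A \ B).card = A.card - B.card := Finset.card_sdiff_of_subset hBA
    have h3 : B.card ≤ A.card := Finset.card_le_card hBA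
    omega
  have hnext : ∀ i j, i < n → j < n → σ j = σ i + 1 → j = i + 1 := by
    intro i j hin hjn hσji
    rcases lt_trichotomy j (i+1) with h | h | h
    · rcases Nat.lt_or_ge j i with h' | h'
      · have := hσmono j i h' hin; omega
      · have hji : j = i := by omega
        rw [hji] at hσji; omega
    · exact h
    · have h1 := hσmono (i+1) j h hjn
      have h2 := hσmono i (i+1) (by omega) (by omega)
      omega
  -- edge membership characterizations
  have hE1 : ∀ i, i + 1 < n → (s(v i, v (i+1)) ∈ O₁ ↔ Even i) := by
    intro i hi
    constructor
    · intro h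
      obtain ⟨j, hj, heq⟩ := char1 _ h
      rw [Sym2.eq_iff] at heq
      rcases heq with ⟨h1, _⟩ | ⟨h1, h2⟩
      · have := hvainj _ _ (by omega) (by omega) h1; exact ⟨j, by omega⟩
      · have e1 := hvainj _ _ (by omega) (by omega) h1
        have e2 := hvainj _ _ (by omega) (by omega) h2
        omega
    · intro h
      exact (pair1 i (by omega) h).2
  have hE2 : ∀ i, i + 1 < n →
      (s(v i, v (i+1)) ∈ O₂ ↔ (σ (i+1) = σ i + 1 ∧ Even (σ i))) := by
    intro i hi
    constructor
    · intro h
      obtain ⟨j, hj, heq⟩ := char2 _ h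
      rw [Sym2.eq_iff] at heq
      rcases heq with ⟨h1, h2⟩ | ⟨h1, h2⟩
      · have e1 := hσuniq i (2*j) (by omega) (by omega) h1.symm
        have e2 := hσuniq (i+1) (2*j+1) (by omega) (by omega) h2.symm
        exact ⟨by omega, by rw [← e1]; exact ⟨j, by omega⟩⟩
      · have e1 := hσuniq i (2*j+1) (by omega) (by omega) h1.symm
        have e2 := hσuniq (i+1) (2*j) (by omega) (by omega) h2.symm
        have := hσmono i (i+1) (by omega) (by omega)
        omega
    · rintro ⟨h1, h2⟩
      have h3 := (pair2 (σ i) (hσm i (by omega)) h2).2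
      rw [← h1, hσw i (by omega), hσw (i+1) (by omega)] at h3
      exact h3
  -- uniqueness helpers
  have hu1 : ∀ x e e', e ∈ O₁ → x ∈ e → e' ∈ O₁ → x ∈ e' → e = e' := by
    intro x e e' he hxe he' hxe'
    have hxS : x ∈ V₁ := hO₁.2.1 e he x hxe
    obtain ⟨u, _, hq⟩ := hO₁.2.2 x hxS
    rw [hq e ⟨he, hxe⟩, hq e' ⟨he', hxe'⟩]
  have hu2 : ∀ x e e', e ∈ O₂ → x ∈ e → e' ∈ O₂ → x ∈ e' → e = e' := by
    intro x e e' he hxe he' hxe'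
    have hxS : x ∈ V₂ := hO₂.2.1 e he x hxe
    obtain ⟨u, _, hq⟩ := hO₂.2.2 x hxS
    rw [hq e ⟨he, hxe⟩, hq e' ⟨he', hxe'⟩]
  have hDsub : ∀ e ∈ D, e ∈ O₁ ∨ e ∈ O₂ := by
    intro e he
    rw [hD, Finset.mem_union, Finset.mem_sdiff, Finset.mem_sdiff] at he
    tauto
  have hDiff : ∀ e, e ∈ D ↔ ((e ∈ O₁ ∧ e ∉ O₂) ∨ (e ∈ O₂ ∧ e ∉ O₁)) := by
    intro e
    rw [hD, Finset.mem_union, Finset.mem_sdiff, Finset.mem_sdiff]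
  -- ## conclusion 1
  have C1 : ∀ e ∈ D, (∀ x ∈ e, x ∈ V₁) → ∃ i, i + 1 < n ∧ e = s(v i, v (i + 1)) := by
    intro e heD hend
    rcases hDsub e heD with h | h
    · obtain ⟨j, hj, heq⟩ := char1 _ h
      exact ⟨2*j, by omega, heq⟩
    · obtain ⟨j, hj, heq⟩ := char2 _ h
      have h1 : w (2*j) ∈ V₁ := hend _ (by rw [heq]; simp)
      have h2 : w (2*j+1) ∈ V₁ := hend _ (by rw [heq]; simp)
      rw [hV₁] at h1 h2
      obtain ⟨a, ha, hva⟩ := Finset.mem_image.1 h1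
      obtain ⟨b, hb, hvb⟩ := Finset.mem_image.1 h2
      rw [Finset.mem_range] at ha hb
      have e1 := hσuniq a (2*j) ha (by omega) hva.symm
      have e2 := hσuniq b (2*j+1) hb (by omega) hvb.symm
      have hba : b = a + 1 := hnext a b ha hb (by omega)
      refine ⟨a, by omega, ?_⟩
      rw [heq, ← hva, ← hvb, hba]
  -- ## conclusion 2
  have C2 : ∀ e ∈ D, (∃ x ∈ e, x ∉ V₁) → e ∈ O₂ := by
    intro e heD ⟨x, hxe, hxV⟩
    rcases hDsub e heD with h | h
    · exact absurd (hO₁.2.1 e h x hxe) hxV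
    · exact h
  -- ## conclusion 3
  have C3 : ∀ x ∈ V₁, (D.filter (fun e => x ∈ e)).card = 0 ∨ (D.filter (fun e => x ∈ e)).card = 2 := by
    intro x hxV
    obtain ⟨e₁, ⟨he₁, hxe₁⟩, hq₁⟩ := hO₁.2.2 x hxV
    obtain ⟨e₂, ⟨he₂, hxe₂⟩, hq₂⟩ := hO₂.2.2 x (hsub hxV)
    have hDx : ∀ e, e ∈ D → x ∈ e → e = e₁ ∨ e = e₂ := by
      intro e heD hxe
      rcases hDsub e heD with h | h
      · exact Or.inl (hu1 x e e₁ h hxe he₁ hxe₁)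
      · exact Or.inr (hu2 x e e₂ h hxe he₂ hxe₂)
    by_cases h12 : e₁ = e₂
    · left
      rw [Finset.card_eq_zero, Finset.eq_empty_iff_forall_notMem]
      intro e he
      rw [Finset.mem_filter] at he
      obtain ⟨heD, hxe⟩ := he
      have hO1e : e ∈ O₁ := by
        rcases hDx e heD hxe with rfl | rfl
        · exact he₁
        · rw [← h12]; exact he₁
      have hO2e : e ∈ O₂ := by
        rcases hDx e heD hxe with rfl | rfl
        · rw [h12]; exact he₂
        · exact he₂
      rcases (hDiff e).1 heD with ⟨_, h⟩ | ⟨_, h⟩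
      · exact h hO2e
      · exact h hO1e
    · right
      have he₁D : e₁ ∈ D := by
        refine (hDiff e₁).2 (Or.inl ⟨he₁, fun hc => h12 ?_⟩)
        exact hu2 x e₁ e₂ hc hxe₁ he₂ hxe₂
      have he₂D : e₂ ∈ D := by
        refine (hDiff e₂).2 (Or.inr ⟨he₂, fun hc => h12 ?_⟩)
        exact (hu1 x e₂ e₁ hc hxe₂ he₁ hxe₁).symm
      have hset : D.filter (fun e => x ∈ e) = {e₁, e₂} := by
        apply Finset.ext
        intro e
        rw [Finset.mem_filter, Finset.mem_insert, Finset.mem_singleton]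
        constructor
        · rintro ⟨heD, hxe⟩; exact hDx e heD hxe
        · rintro (rfl | rfl)
          · exact ⟨he₁D, hxe₁⟩
          · exact ⟨he₂D, hxe₂⟩
      rw [hset, Finset.card_insert_of_notMem (by simpa using h12), Finset.card_singleton]
  -- ## conclusion 4
  have C4 : ∀ x ∈ V₂, x ∉ V₁ → (D.filter (fun e => x ∈ e)).card = 1 := by
    intro x hxV2 hxV1
    obtain ⟨e₂, ⟨he₂, hxe₂⟩, hq₂⟩ := hO₂.2.2 x hxV2
    have he₂O1 : e₂ ∉ O₁ := fun h => hxV1 (hO₁.2.1 e₂ h x hxe₂)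
    have he₂D : e₂ ∈ D := (hDiff e₂).2 (Or.inr ⟨he₂, he₂O1⟩)
    have hset : D.filter (fun e => x ∈ e) = {e₂} := by
      apply Finset.eq_singleton_iff_unique_mem.2
      refine ⟨Finset.mem_filter.2 ⟨he₂D, hxe₂⟩, ?_⟩
      intro e he
      rw [Finset.mem_filter] at he
      rcases hDsub e he.1 with h | h
      · exact absurd (hO₁.2.1 e h x he.2) hxV1
      · exact hu2 x e e₂ h he.2 he₂ hxe₂
    rw [hset, Finset.card_singleton]
  -- ## conclusion 7
  have C7 : ∀ i, i + 1 < n → s(v i, v (i + 1)) ∈ D → (i = 0 ∨ s(v (i - 1), v i) ∉ D) →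
      s(v i, v (i + 1)) ∈ O₁ := by
    intro i hi hiD hstart
    rcases Nat.even_or_odd i with he | ho
    · exact (hE1 i hi).2 he
    exfalso
    obtain ⟨r, hr⟩ := ho
    have hprevO1 : s(v (i-1), v i) ∈ O₁ := by
      have h := (pair1 (i-1) (by omega) ⟨r, by omega⟩).2
      rw [show i - 1 + 1 = i by omega] at h
      exact h
    have hiO1 : s(v i, v (i+1)) ∉ O₁ := by
      intro h
      obtain ⟨t, ht⟩ := (hE1 i hi).1 h
      omega
    have hiO2 : s(v i, v (i+1)) ∈ O₂ := by
      rcases (hDiff _).1 hiD with ⟨h, _⟩ | ⟨h, _⟩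
      · exact absurd h hiO1
      · exact h
    have hprevO2 : s(v (i-1), v i) ∉ O₂ := by
      intro h
      have heq := hu2 (v i) _ _ h (by simp) hiO2 (by simp)
      rw [Sym2.eq_iff] at heq
      rcases heq with ⟨h1, h2⟩ | ⟨h1, h2⟩
      · have := hvainj _ _ (by omega) (by omega) h2; omega
      · have := hvainj _ _ (by omega) (by omega) h1; omega
    have hprevD : s(v (i-1), v i) ∈ D := (hDiff _).2 (Or.inl ⟨hprevO1, hprevO2⟩)
    rcases hstart with h0 | hnot
    · omega
    · exact hnot hprevD
  -- ## conclusion 8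
  have C8 : ∀ i, i + 1 < n → s(v i, v (i + 1)) ∈ D → (i + 2 = n ∨ s(v (i + 1), v (i + 2)) ∉ D) →
      s(v i, v (i + 1)) ∈ O₁ := by
    intro i hi hiD hend
    rcases Nat.even_or_odd i with he | ho
    · exact (hE1 i hi).2 he
    exfalso
    obtain ⟨r, hr⟩ := ho
    obtain ⟨t, htn⟩ := hneven
    have hi2 : i + 2 < n := by omega
    have hnextO1 : s(v (i+1), v (i+2)) ∈ O₁ := by
      have h := (pair1 (i+1) (by omega) ⟨r+1, by omega⟩).2
      rw [show i + 1 + 1 = i + 2 by omega] at h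
      exact h
    have hnotD : s(v (i+1), v (i+2)) ∉ D := by
      rcases hend with h | h
      · omega
      · exact h
    have hnextO2 : s(v (i+1), v (i+2)) ∈ O₂ := by
      by_contra hc
      exact hnotD ((hDiff _).2 (Or.inl ⟨hnextO1, hc⟩))
    have hiO1 : s(v i, v (i+1)) ∉ O₁ := by
      intro h
      obtain ⟨t', ht'⟩ := (hE1 i hi).1 h
      omega
    have hiO2 : s(v i, v (i+1)) ∈ O₂ := by
      rcases (hDiff _).1 hiD with ⟨h, _⟩ | ⟨h, _⟩
      · exact absurd h hiO1
      · exact h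
    have heq := hu2 (v (i+1)) _ _ hiO2 (by simp) hnextO2 (by simp)
    rw [Sym2.eq_iff] at heq
    rcases heq with ⟨h1, h2⟩ | ⟨h1, h2⟩
    · have := hvainj _ _ (by omega) (by omega) h1; omega
    · have := hvainj _ _ (by omega) (by omega) h1; omega
  -- ## conclusion 6
  have C6 : ((Finset.range (n - 1)).filter (fun i => s(v i, v (i + 1)) ∈ D ∧
      (i = 0 ∨ s(v (i - 1), v i) ∉ D))).card ≤ k := by
    set T := (Finset.range (n - 1)).filter (fun i => s(v i, v (i + 1)) ∈ D ∧
      (i = 0 ∨ s(v (i - 1), v i) ∉ D)) with hT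
    have hTfact : ∀ i ∈ T, i + 1 < n ∧ Even i ∧ s(v i, v (i+1)) ∈ O₁ ∧ s(v i, v (i+1)) ∉ O₂
        ∧ (i = 0 ∨ s(v (i - 1), v i) ∉ D) := by
      intro i hiT
      rw [hT, Finset.mem_filter, Finset.mem_range] at hiT
      obtain ⟨hirange, hiD, hstart⟩ := hiT
      have hi1 : i + 1 < n := by omega
      have hO1 : s(v i, v (i+1)) ∈ O₁ := C7 i hi1 hiD hstart
      have hEv : Even i := (hE1 i hi1).1 hO1
      have hnO2 : s(v i, v (i+1)) ∉ O₂ := by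
        intro hc
        rcases (hDiff _).1 hiD with ⟨_, h⟩ | ⟨_, h⟩
        · exact h hc
        · exact h hO1
      exact ⟨hi1, hEv, hO1, hnO2, hstart⟩
    set c : ℕ → ℕ := fun i => σ i - i + (σ i + 1) % 2 with hc
    have hkey : ∀ i ∈ T, c i % 2 = 1 ∧ c i < 2*k ∧ σ i - i ≤ c i ∧ c i + i + 1 ≤ σ (i+1) := by
      intro i hiT
      obtain ⟨hi1, ⟨ri, hri⟩, hO1, hnO2, _⟩ := hTfact i hiT
      have hge := hσge i (by omega)
      have hle := hσle i (by omega)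
      have hge1 := hσge (i+1) (by omega)
      have hle1 := hσle (i+1) (by omega)
      have hmono := hσmono i (i+1) (by omega) (by omega)
      have hne : ¬ (σ (i+1) = σ i + 1 ∧ Even (σ i)) := fun hcon => hnO2 ((hE2 i hi1).2 hcon)
      have hceq : c i = σ i - i + (σ i + 1) % 2 := by rw [hc]
      by_cases hp : Even (σ i)
      · obtain ⟨s, hs⟩ := hp
        have hgap2 : σ i + 2 ≤ σ (i+1) := by
          rcases Nat.lt_or_ge (σ i + 1) (σ (i+1)) with h | h
          · omega
          · exfalso; exact hne ⟨by omega, ⟨s, hs⟩⟩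
        omega
      · rcases Nat.even_or_odd (σ i) with h | ⟨s, hs⟩
        · exact absurd h hp
        omega
    have hmonoc : ∀ i ∈ T, ∀ i' ∈ T, i < i' → c i < c i' := by
      intro i hiT i' hiT'
      intro hii
      obtain ⟨hodd, hlt2k, hlow, hhigh⟩ := hkey i hiT
      obtain ⟨hodd', hlt2k', hlow', hhigh'⟩ := hkey i' hiT'
      obtain ⟨hi1, ⟨ri, hri⟩, hO1, hnO2, hstart⟩ := hTfact i hiT
      obtain ⟨hi1', ⟨ri', hri'⟩, hO1', hnO2', hstart'⟩ := hTfact i' hiT'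
      have hii2 : i + 2 ≤ i' := by omega
      -- f monotone from i+1 up to i'
      have hg1 : σ (i+1) + (i' - (i+1)) ≤ σ i' := by
        have h := hgap (i' - (i+1)) (i+1) (by omega)
        rw [show i + 1 + (i' - (i+1)) = i' by omega] at h
        exact h
      have hceq : c i = σ i - i + (σ i + 1) % 2 := by rw [hc]
      have hceq' : c i' = σ i' - i' + (σ i' + 1) % 2 := by rw [hc]
      by_cases hp' : Even (σ i')
      · -- c i' = σ i' - i' + 1 > σ i' - i' ≥ c i
        obtain ⟨s', hs'⟩ := hp'
        have hge' := hσge i' (by omega)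
        omega
      · rcases Nat.even_or_odd (σ i') with h | ⟨s', hs'⟩
        · exact absurd h hp'
        have hge' := hσge i' (by omega)
        -- suppose equality; derive contradiction
        by_contra hcon
        have heq : c i = σ i' - i' := by omega
        -- then f is constant from i+1 to i', in particular σ i' = σ (i'-1) + 1
        have hg2 : σ (i+1) + ((i'-1) - (i+1)) ≤ σ (i'-1) := by
          have h := hgap ((i'-1) - (i+1)) (i+1) (by omega)
          rw [show i + 1 + ((i'-1) - (i+1)) = i' - 1 by omega] at h
          exact h
        have hg3 : σ (i'-1) + 1 ≤ σ i' := by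
          have h := hσmono (i'-1) i' (by omega) (by omega)
          omega
        have hge1 := hσge (i+1) (by omega)
        have hstep : σ i' = σ (i'-1) + 1 := by omega
        have hpar : Even (σ (i'-1)) := ⟨s', by omega⟩
        have hmemO2 : s(v (i'-1), v i') ∈ O₂ := by
          have h := (hE2 (i'-1) (by omega)).2 (by rw [show i' - 1 + 1 = i' by omega]; exact ⟨hstep, hpar⟩)
          rw [show i' - 1 + 1 = i' by omega] at h
          exact h
        have hmemO1 : s(v (i'-1), v i') ∉ O₁ := by
          intro hcon1
          have h := (hE1 (i'-1) (by omega)).1 (by rw [show i' - 1 + 1 = i' by omega]; exact hcon1)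
          obtain ⟨t, ht⟩ := h
          omega
        have hmemD : s(v (i'-1), v i') ∈ D := (hDiff _).2 (Or.inr ⟨hmemO2, hmemO1⟩)
        rcases hstart' with h0 | hnot
        · omega
        · exact hnot hmemD
    have hmaps : ∀ i ∈ T, (c i - 1) / 2 ∈ Finset.range k := by
      intro i hiT
      obtain ⟨hodd, hlt2k, _, _⟩ := hkey i hiT
      rw [Finset.mem_range]
      omega
    have hinj : Set.InjOn (fun i => (c i - 1) / 2) ↑T := by
      intro i hiT i' hiT' heq
      rw [Finset.mem_coe] at hiT hiT'
      simp only at heq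
      rcases lt_trichotomy i i' with h | h | h
      · have h1 := hmonoc i hiT i' hiT' h
        obtain ⟨ho, _, _, _⟩ := hkey i hiT
        obtain ⟨ho', _, _, _⟩ := hkey i' hiT'
        omega
      · exact h
      · have h1 := hmonoc i' hiT' i hiT h
        obtain ⟨ho, _, _, _⟩ := hkey i hiT
        obtain ⟨ho', _, _, _⟩ := hkey i' hiT'
        omega
    have := Finset.card_le_card_of_injOn _ hmaps hinj
    simpa using this
  -- ## conclusion 5
  have hGadj : ∀ a b : ℝ, s(a,b) ∈ D → a ≠ b →
      (SimpleGraph.fromEdgeSet (↑D : Set (Sym2 ℝ))).Adj a b := by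
    intro a b hab hne
    rw [SimpleGraph.fromEdgeSet_adj]
    exact ⟨by simpa using hab, hne⟩
  have R : ∀ i, i < n → (∃ e ∈ D, v i ∈ e) →
      ∃ y, y ∈ V₂ ∧ y ∉ V₁ ∧
        (SimpleGraph.fromEdgeSet (↑D : Set (Sym2 ℝ))).Reachable (v i) y := by
    intro i
    induction i using Nat.strong_induction_on with
    | _ i IH =>
      rintro hin ⟨e, heD, hvie⟩
      obtain ⟨e₁, ⟨he₁, hxe₁⟩, hq₁⟩ := hO₁.2.2 (v i) (hvmem i hin)
      obtain ⟨e₂, ⟨he₂, hxe₂⟩, hq₂⟩ := hO₂.2.2 (v i) (hsub (hvmem i hin))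
      have h2D : e₂ ∈ D := by
        by_contra hc
        have he₂O1 : e₂ ∈ O₁ := by
          by_contra hc1
          exact hc ((hDiff e₂).2 (Or.inr ⟨he₂, hc1⟩))
        have he12 : e₂ = e₁ := hu1 _ _ _ he₂O1 hxe₂ he₁ hxe₁
        have he₁D : e₁ ∉ D := by
          intro h
          have he₁O2 : e₁ ∈ O₂ := by rw [← he12]; exact he₂
          rcases (hDiff e₁).1 h with ⟨_, h2⟩ | ⟨_, h2⟩
          · exact h2 he₁O2
          · exact h2 he₁
        rcases hDsub e heD with h | h
        · have heq := hq₁ e ⟨h, hvie⟩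
          rw [heq] at heD
          exact he₁D heD
        · have heq := hq₂ e ⟨h, hvie⟩
          rw [heq] at heD
          exact hc heD
      obtain ⟨j, hj, he₂eq⟩ := char2 _ he₂
      have hximem : v i = w (2*j) ∨ v i = w (2*j+1) := by
        rw [he₂eq, Sym2.mem_iff] at hxe₂; exact hxe₂
      rcases hximem with hxw | hxw
      · -- σ i = 2j, O₂-partner is to the right
        have hσi : 2*j = σ i := hσuniq i (2*j) hin (by omega) hxw.symm
        have hlt : v i < w (2*j+1) := by
          rw [hxw]; exact hw (2*j) (2*j+1) (by omega) (by omega)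
        have he₂eq' : e₂ = s(v i, w (2*j+1)) := by rw [he₂eq, hxw]
        have hadj : (SimpleGraph.fromEdgeSet (↑D : Set (Sym2 ℝ))).Adj (v i) (w (2*j+1)) :=
          hGadj _ _ (by rw [← he₂eq']; exact h2D) (ne_of_lt hlt)
        by_cases hpV : w (2*j+1) ∈ V₁
        · obtain ⟨b, hb, hvb⟩ := Finset.mem_image.1 (hV₁ ▸ hpV)
          rw [Finset.mem_range] at hb
          have hσb : 2*j+1 = σ b := hσuniq b (2*j+1) hb (by omega) hvb.symm
          have hbi : b = i + 1 := hnext i b hin hb (by omega)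
          have he₂eq'' : e₂ = s(v i, v (i+1)) := by
            rw [he₂eq', ← hvb, hbi]
          have hi1n : i + 1 < n := by omega
          have hoddi : ¬ Even i := by
            intro hev
            obtain ⟨_, hO1mem⟩ := pair1 i hin hev
            have he₂O1 : e₂ ∈ O₁ := by rw [he₂eq'']; exact hO1mem
            rcases (hDiff e₂).1 h2D with ⟨_, h2⟩ | ⟨_, h2⟩
            · exact h2 he₂
            · exact h2 he₂O1
          rcases Nat.even_or_odd i with hev | ⟨r, hr⟩
          · exact absurd hev hoddi
          have hprevO1 : s(v (i-1), v i) ∈ O₁ := by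
            have h := (pair1 (i-1) (by omega) ⟨r, by omega⟩).2
            rw [show i - 1 + 1 = i by omega] at h
            exact h
          have hprevnO2 : s(v (i-1), v i) ∉ O₂ := by
            intro hcon
            have heq := hu2 (v i) _ _ hcon (by simp) he₂ (by rw [he₂eq'']; simp)
            rw [he₂eq'', Sym2.eq_iff] at heq
            rcases heq with ⟨h1, h2⟩ | ⟨h1, h2⟩
            · have := hvainj _ _ (by omega) (by omega) h1; omega
            · have := hvainj _ _ (by omega) (by omega) h1; omega
          have hprevD : s(v (i-1), v i) ∈ D := (hDiff _).2 (Or.inl ⟨hprevO1, hprevnO2⟩)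
          obtain ⟨y, hy1, hy2, hy3⟩ := IH (i-1) (by omega) (by omega)
            ⟨s(v (i-1), v i), hprevD, by simp⟩
          refine ⟨y, hy1, hy2, ?_⟩
          have hadjL : (SimpleGraph.fromEdgeSet (↑D : Set (Sym2 ℝ))).Adj (v i) (v (i-1)) := by
            refine hGadj _ _ (by rw [Sym2.eq_swap]; exact hprevD) ?_
            intro hcon
            have := hvainj i (i-1) hin (by omega) hcon; omega
          exact hadjL.reachable.trans hy3
        · exact ⟨w (2*j+1), hwmem _ (by omega), hpV, hadj.reachable⟩
      · -- σ i = 2j+1, O₂-partner is to the left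
        have hσi : 2*j+1 = σ i := hσuniq i (2*j+1) hin (by omega) hxw.symm
        have hlt : w (2*j) < v i := by
          rw [hxw]; exact hw (2*j) (2*j+1) (by omega) (by omega)
        have he₂eq' : e₂ = s(w (2*j), v i) := by rw [he₂eq, hxw]
        have hadj : (SimpleGraph.fromEdgeSet (↑D : Set (Sym2 ℝ))).Adj (v i) (w (2*j)) := by
          refine hGadj _ _ ?_ (ne_of_gt hlt)
          rw [Sym2.eq_swap, ← he₂eq']; exact h2D
        by_cases hpV : w (2*j) ∈ V₁
        · obtain ⟨b, hb, hvb⟩ := Finset.mem_image.1 (hV₁ ▸ hpV)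
          rw [Finset.mem_range] at hb
          have hσb : 2*j = σ b := hσuniq b (2*j) hb (by omega) hvb.symm
          have hbi : b < i := by
            rcases Nat.lt_or_ge b i with h | h
            · exact h
            · exfalso
              rcases Nat.lt_or_ge i b with h' | h'
              · have := hσmono i b h' hb; omega
              · have : b = i := by omega
                rw [this] at hσb; omega
          obtain ⟨y, hy1, hy2, hy3⟩ := IH b hbi hb
            ⟨e₂, h2D, by rw [he₂eq']; exact Sym2.mem_iff.2 (Or.inl hvb)⟩
          refine ⟨y, hy1, hy2, ?_⟩
          rw [← hvb] at hadj
          exact hadj.reachable.trans hy3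
        · exact ⟨w (2*j), hwmem _ (by omega), hpV, hadj.reachable⟩
  have C5 : ∀ x : ℝ, (∃ e ∈ D, x ∈ e) →
      ∃ y, y ∈ V₂ ∧ y ∉ V₁ ∧ (SimpleGraph.fromEdgeSet (↑D : Set (Sym2 ℝ))).Reachable x y := by
    rintro x ⟨e, heD, hxe⟩
    by_cases hxV : x ∈ V₁
    · obtain ⟨i, hi, rfl⟩ := Finset.mem_image.1 (hV₁ ▸ hxV)
      exact R i (Finset.mem_range.1 hi) ⟨e, heD, hxe⟩
    · refine ⟨x, ?_, hxV, SimpleGraph.Reachable.refl x⟩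
      rcases hDsub e heD with h | h
      · exact absurd (hO₁.2.1 e h x hxe) hxV
      · exact hO₂.2.1 e h x hxe
  exact ⟨C1, C2, C3, C4, C5, C6, C7, C8⟩
end
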